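/- arXiv:2412.18236 — 8 statements merged into one kernel-verified Lean document; each statement's English description precedes it below -/
import Mathlib

section
/- Let A be a unital algebra over a field of characteristic zero and R a Rota–Baxter operator of weight zero on A with R(1) ∈ F·1. Then R(1) = 0, R² = 0, and Im(R) ⊆ ker(R). -/
def IsRotaBaxterWeightZero {F A : Type*} [CommSemiring F] [Semiring A] [Algebra F A]
    (R : A →ₗ[F] A) : Prop :=
  ∀ a b : A, R a * R b = R (R a * b + a * R b)

namespace IsRotaBaxterWeightZero

variable {F A : Type*}

theorem map_map_eq_zero [CommSemiring F] [Semiring A] [Algebra F A] {R : A →ₗ[F] A}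
    (hR : IsRotaBaxterWeightZero R) (h1 : R 1 = 0) (a : A) : R (R a) = 0 := by
  simpa [h1] using (hR a 1).symm

theorem map_one_mul_map_one [CommSemiring F] [Semiring A] [Algebra F A] {R : A →ₗ[F] A}
    (hR : IsRotaBaxterWeightZero R) : R 1 * R 1 = 2 • R (R 1) := by
  rw [hR, one_mul, mul_one, ← two_nsmul, map_nsmul]

/-- `(μ • 1) * (μ • 1) = R (2 μ • 1)` reads `μ² • 1 = 2 • μ² • 1`, so `μ² • 1 = 0`. -/
theorem map_one_eq_zero [Field F] [Ring A] [Algebra F A] {R : A →ₗ[F] A} {μ : F}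
    (hR : IsRotaBaxterWeightZero R) (h1 : R 1 = μ • (1 : A)) : R 1 = 0 := by
  have hsq : (μ * μ) • (1 : A) = 2 • (μ * μ) • (1 : A) := by
    have := hR.map_one_mul_map_one
    rwa [h1, map_smul, h1, smul_mul_smul_comm, one_mul, smul_smul] at this
  have hsq_zero : (μ * μ) • (1 : A) = 0 := by
    rw [two_nsmul] at hsq
    exact left_eq_add.mp hsq
  rcases eq_or_ne μ 0 with rfl | hμ
  · rw [h1, zero_smul]
  · rw [h1, ← inv_smul_smul₀ hμ (μ • (1 : A)), smul_smul μ, hsq_zero, smul_zero]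

end IsRotaBaxterWeightZero

theorem stmt6_general {F A : Type*} [Field F] [Ring A] [Algebra F A]
    (R : A →ₗ[F] A) (μ : F)
    (hR : ∀ a b : A, R a * R b = R (R a * b + a * R b))
    (h1 : R 1 = μ • (1 : A)) :
    R 1 = 0 ∧ (∀ a : A, R (R a) = 0) ∧ ∀ a : A, R a ∈ LinearMap.ker R := by
  have hRB : IsRotaBaxterWeightZero R := hR
  have h1' : R 1 = 0 := hRB.map_one_eq_zero h1
  exact ⟨h1', hRB.map_map_eq_zero h1', hRB.map_map_eq_zero h1'⟩

/-- A Rota–Baxter operator of weight zero on a unital algebra over a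
field of characteristic zero with `R(1) ∈ F·1` satisfies `R(1) = 0`, `R² = 0`,
and `Im R ⊆ ker R`. -/
theorem stmt6 {F A : Type*} [Field F] [CharZero F] [Ring A] [Algebra F A]
    (R : A →ₗ[F] A) (μ : F)
    (hR : ∀ a b : A, R a * R b = R (R a * b + a * R b))
    (h1 : R 1 = μ • (1 : A)) :
    R 1 = 0 ∧ (∀ a : A, R (R a) = 0) ∧ ∀ a : A, R a ∈ LinearMap.ker R :=
  stmt6_general R μ hR h1
end

section
/- Fix m > 0, natural numbers p_b and scalars q_b ∈ F for 0 < b ≤ m such that p_b = 0 implies q_b = 0. Then the linear operator T on the non-unital polynomial algebra F₀[x] defined on the monomial basis by T(x^{ma+b}) = q_b · x^{m(a+p_b)} for all a ≥ 0 and 0 < b ≤ m is an averaging operator, i.e. T(f)T(g) = T(T(f)g) = T(fT(g)) for all f, g ∈ F₀[x]. -/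
/-!
Every positive exponent is `m * a + b` with `0 < b ≤ m`, so `T` sends each monomial of `F₀[x]`
to a scalar multiple of a power of `x ^ m`, and `T` commutes with multiplication by powers of
`x ^ m` (this only shifts `a`). Hence `T (T f * g) = T f * T g` on monomials, and both
averaging identities extend to `F₀[x]` by bilinearity.
-/

open Polynomial

theorem Nat.exists_eq_mul_add_of_pos {m n : ℕ} (hm : 0 < m) (hn : 0 < n) :
    ∃ a b, 0 < b ∧ b ≤ m ∧ n = m * a + b := by
  have := Nat.div_add_mod (n - 1) m
  have := Nat.mod_lt (n - 1) hm
  exact ⟨(n - 1) / m, (n - 1) % m + 1, by omega, by omega, by omega⟩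

namespace Polynomial

variable {R M : Type*} [CommSemiring R] [AddCommMonoid M] [Module R M]

theorem linearMap_apply_eq_of_coeff_zero {L L' : R[X] →ₗ[R] M}
    (h : ∀ n, 0 < n → L (X ^ n) = L' (X ^ n)) {f : R[X]} (hf : f.coeff 0 = 0) :
    L f = L' f := by
  obtain ⟨g, rfl⟩ := X_dvd_iff.mpr hf
  clear hf
  induction g using Polynomial.induction_on' with
  | add g g' hg hg' => simp only [mul_add, map_add, hg, hg']
  | monomial n a =>
    rw [← smul_X_eq_monomial, mul_smul_comm, ← pow_succ', map_smul, map_smul,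
      h _ n.succ_pos]

theorem bilinear_apply_eq_of_coeff_zero {B B' : R[X] →ₗ[R] R[X] →ₗ[R] M}
    (h : ∀ i j, 0 < i → 0 < j → B (X ^ i) (X ^ j) = B' (X ^ i) (X ^ j))
    {f g : R[X]} (hf : f.coeff 0 = 0) (hg : g.coeff 0 = 0) : B f g = B' f g :=
  linearMap_apply_eq_of_coeff_zero (L := B.flip g) (L' := B'.flip g)
    (fun i hi => linearMap_apply_eq_of_coeff_zero (h i · hi) hg) hf

end Polynomial

section MonomialOperator

variable {R : Type*} [CommSemiring R] {m : ℕ} {p : ℕ → ℕ} {q : ℕ → R} {T : R[X] →ₗ[R] R[X]}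

theorem exists_map_X_pow_eq_smul_X_pow_mul (hm : 0 < m)
    (hT : ∀ a b, 0 < b → b ≤ m → T (X ^ (m * a + b)) = q b • X ^ (m * (a + p b)))
    {n : ℕ} (hn : 0 < n) : ∃ (r : R) (k : ℕ), T (X ^ n) = r • X ^ (m * k) := by
  obtain ⟨a, b, hb, hbm, rfl⟩ := Nat.exists_eq_mul_add_of_pos hm hn
  exact ⟨q b, a + p b, hT a b hb hbm⟩

theorem map_X_pow_mul_mul_X_pow (hm : 0 < m)
    (hT : ∀ a b, 0 < b → b ≤ m → T (X ^ (m * a + b)) = q b • X ^ (m * (a + p b)))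
    (c : ℕ) {n : ℕ} (hn : 0 < n) : T (X ^ (m * c) * X ^ n) = X ^ (m * c) * T (X ^ n) := by
  obtain ⟨a, b, hb, hbm, rfl⟩ := Nat.exists_eq_mul_add_of_pos hm hn
  rw [← pow_add, show m * c + (m * a + b) = m * (c + a) + b by ring, hT _ _ hb hbm,
    hT _ _ hb hbm, mul_smul_comm, ← pow_add, add_assoc, mul_add]

theorem map_map_X_pow_mul_X_pow (hm : 0 < m)
    (hT : ∀ a b, 0 < b → b ≤ m → T (X ^ (m * a + b)) = q b • X ^ (m * (a + p b)))
    {i j : ℕ} (hi : 0 < i) (hj : 0 < j) : T (T (X ^ i) * X ^ j) = T (X ^ i) * T (X ^ j) := by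
  obtain ⟨r, k, hk⟩ := exists_map_X_pow_eq_smul_X_pow_mul hm hT hi
  rw [hk, smul_mul_assoc, map_smul, map_X_pow_mul_mul_X_pow hm hT k hj, smul_mul_assoc]

end MonomialOperator

theorem stmt12_general {F : Type*} [Field F] (m : ℕ) (hm : 0 < m)
    (p : ℕ → ℕ) (q : ℕ → F)
    (T : Polynomial F →ₗ[F] Polynomial F)
    (hT : ∀ (a b : ℕ), 0 < b → b ≤ m →
      T (X ^ (m * a + b)) = q b • X ^ (m * (a + p b))) :
    ∀ f g : Polynomial F, f.coeff 0 = 0 → g.coeff 0 = 0 →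
      T f * T g = T (T f * g) ∧ T f * T g = T (f * T g) := by
  intro f g hf hg
  have averaging := fun {i j : ℕ} (hi : 0 < i) (hj : 0 < j) =>
    (map_map_X_pow_mul_X_pow hm hT hi hj).symm
  constructor
  · refine bilinear_apply_eq_of_coeff_zero (B := (LinearMap.mul F F[X]).compl₁₂ T T)
      (B' := (LinearMap.mul F F[X] ∘ₗ T).compr₂ T) (fun i j hi hj => ?_) hf hg
    simpa using averaging hi hj
  · refine bilinear_apply_eq_of_coeff_zero (B := (LinearMap.mul F F[X]).compl₁₂ T T)
      (B' := ((LinearMap.mul F F[X]).compl₂ T).compr₂ T) (fun i j hi hj => ?_) hf hg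
    simpa [mul_comm] using averaging hj hi

/-- The monomial operator `T(x^{ma+b}) = q_b x^{m(a+p_b)}`
(for `0 < b ≤ m`, with `p_b = 0 → q_b = 0`) is an averaging operator on the
augmentation ideal `F₀[x]` of polynomials with zero constant term. -/
theorem stmt12 {F : Type*} [Field F] (m : ℕ) (hm : 0 < m)
    (p : ℕ → ℕ) (q : ℕ → F)
    (hpq : ∀ b : ℕ, 0 < b → b ≤ m → p b = 0 → q b = 0)
    (T : Polynomial F →ₗ[F] Polynomial F)
    (hT : ∀ (a b : ℕ), 0 < b → b ≤ m →
      T (X ^ (m * a + b)) = q b • X ^ (m * (a + p b))) :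
    ∀ f g : Polynomial F, f.coeff 0 = 0 → g.coeff 0 = 0 →
      T f * T g = T (T f * g) ∧ T f * T g = T (f * T g) :=
  stmt12_general m hm p q T hT
end

section
/- Let F have characteristic zero and let R be a monomial Rota–Baxter operator of weight zero on F₀[X] (polynomials without constant term in variables X). Suppose R(∏_{i∈J} x_i^{a_i}) = α·∏_{i∈J} x_i^{b_i} with α ≠ 0, a_i ≥ b_i for all i in a finite index set J, and a_k > b_k for some k. Then this leads to a contradiction; i.e., such a strict degree decrease componentwise on a monomial (onto a monomial dividing it properly) is impossible. -/
/-!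
Put `w = a - b ≠ 0` and `R(x^w) = β x^u`. The Rota–Baxter identity for `x^w` and `x^a = x^w x^b`
reads `β α x^{u+b} = β R(x^{u+a}) + α² x^b`. If `β = 0` this forces `α = 0`. Otherwise `u ≠ 0`,
since `R` preserves the augmentation ideal, so `x^b` does not occur on the left; as `R(x^{u+a})`
is a single monomial, it must cancel `α² x^b`, and then nothing on the right matches `x^{u+b}`.
-/

open MvPolynomial

namespace MvPolynomial

variable {σ S : Type*} [CommSemiring S]

theorem coeff_zero_monomial_of_ne_zero {d : σ →₀ ℕ} (hd : d ≠ 0) (a : S) :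
    coeff 0 (monomial d a) = 0 := by
  classical
  simp [coeff_monomial, hd]

theorem eq_zero_of_monomial_eq_monomial_add_monomial {m e b : σ →₀ ℕ} {p q r : S}
    (h : monomial m p = monomial e q + monomial b r) (hmb : m ≠ b) (hr : r ≠ 0) : p = 0 := by
  classical
  have hb := congrArg (coeff b) h
  have hm := congrArg (coeff m) h
  simp only [coeff_add, coeff_monomial, if_neg hmb, if_neg hmb.symm, add_zero] at hb hm
  by_cases heb : e = b
  · simpa [heb, hmb.symm] using hm
  · simp [heb, hr.symm] at hb

theorem rotaBaxter_monomial_mul {R : MvPolynomial σ S →ₗ[S] MvPolynomial σ S}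
    (hRB : ∀ f g : MvPolynomial σ S, coeff 0 f = 0 → coeff 0 g = 0 →
      R f * R g = R (R f * g + f * R g))
    {w b u : σ →₀ ℕ} (hw : w ≠ 0) {α β : S}
    (hu : R (monomial w 1) = β • monomial u 1) (hb : R (monomial (w + b) 1) = α • monomial b 1) :
    monomial (u + b) (β * α) = β • R (monomial (u + w + b) 1) + monomial b (α * α) := by
  have key := hRB (monomial w 1) (monomial (w + b) 1) (coeff_zero_monomial_of_ne_zero hw 1)
    (coeff_zero_monomial_of_ne_zero (fun h => hw (add_eq_zero.mp h).1) 1)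
  rw [hu, hb, smul_mul_smul_comm, smul_mul_assoc, mul_smul_comm, map_add, map_smul, map_smul,
    monomial_mul, monomial_mul, monomial_mul, ← add_assoc, mul_one, hb] at key
  simpa only [smul_smul, smul_monomial, smul_eq_mul, mul_one] using key

end MvPolynomial

theorem stmt14_general {F σ : Type*} [Field F]
    (R : MvPolynomial σ F →ₗ[F] MvPolynomial σ F)
    -- R maps the augmentation ideal into itself
    (hInv : ∀ f : MvPolynomial σ F, coeff 0 f = 0 → coeff 0 (R f) = 0)
    -- R is monomial on the augmentation ideal
    (hMon : ∀ d : σ →₀ ℕ, d ≠ 0 → ∃ (c : F) (e : σ →₀ ℕ),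
      R (monomial d (1 : F)) = c • monomial e (1 : F))
    -- Rota–Baxter identity of weight zero on the augmentation ideal
    (hRB : ∀ f g : MvPolynomial σ F, coeff 0 f = 0 → coeff 0 g = 0 →
      R f * R g = R (R f * g + f * R g))
    (a b : σ →₀ ℕ)
    (hba : ∀ i : σ, b i ≤ a i) (hlt : ∃ k : σ, b k < a k)
    (α : F) (hα : α ≠ 0)
    (hab : R (monomial a (1 : F)) = α • monomial b (1 : F)) :
    False := by
  set w := a - b
  have hwb : w + b = a := tsub_add_cancel_of_le (Finsupp.le_def.mpr hba)
  have hw : w ≠ 0 := by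
    obtain ⟨k, hk⟩ := hlt
    exact Finsupp.ne_iff.mpr ⟨k, by simpa [w] using Nat.sub_ne_zero_of_lt hk⟩
  obtain ⟨β, u, hu⟩ := hMon w hw
  have key := rotaBaxter_monomial_mul hRB hw hu (hwb ▸ hab)
  have hαα : α * α ≠ 0 := mul_ne_zero hα hα
  by_cases hβ : β = 0
  · subst hβ
    simp only [zero_mul, monomial_zero, zero_smul, zero_add] at key
    exact hαα (monomial_eq_zero.mp key.symm)
  · have hu0 : u ≠ 0 := by
      rintro rfl
      have h := hInv (monomial w 1) (coeff_zero_monomial_of_ne_zero hw 1)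
      simp [hu, hβ] at h
    obtain ⟨γ, e, he⟩ := hMon (u + w + b) fun h => hw (add_eq_zero.mp (add_eq_zero.mp h).1).2
    rw [he, smul_smul, smul_monomial, smul_eq_mul, mul_one] at key
    exact mul_ne_zero hβ hα
      (eq_zero_of_monomial_eq_monomial_add_monomial key (add_ne_right.mpr hu0) hαα)

/-- A monomial Rota–Baxter operator of weight zero on `F₀[X]`
(char F = 0) cannot map a monomial `∏ x_i^{a_i}` onto a nonzero multiple of a
monomial `∏ x_i^{b_i}` with `b_i ≤ a_i` for all `i` and `b_k < a_k` for some `k`. -/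
theorem stmt14 {F σ : Type*} [Field F] [CharZero F]
    (R : MvPolynomial σ F →ₗ[F] MvPolynomial σ F)
    -- R maps the augmentation ideal into itself
    (hInv : ∀ f : MvPolynomial σ F, coeff 0 f = 0 → coeff 0 (R f) = 0)
    -- R is monomial on the augmentation ideal
    (hMon : ∀ d : σ →₀ ℕ, d ≠ 0 → ∃ (c : F) (e : σ →₀ ℕ),
      R (monomial d (1 : F)) = c • monomial e (1 : F))
    -- Rota–Baxter identity of weight zero on the augmentation ideal
    (hRB : ∀ f g : MvPolynomial σ F, coeff 0 f = 0 → coeff 0 g = 0 →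
      R f * R g = R (R f * g + f * R g))
    (a b : σ →₀ ℕ) (ha : a ≠ 0)
    (hba : ∀ i : σ, b i ≤ a i) (hlt : ∃ k : σ, b k < a k)
    (α : F) (hα : α ≠ 0)
    (hab : R (monomial a (1 : F)) = α • monomial b (1 : F)) :
    False :=
  stmt14_general R hInv hMon hRB a b hba hlt α hα hab
end

section
/- Fix n > 0, integers a_k with 0 ≤ a_k < k for 0 < k < n, and nonzero scalars β₀, …, β_{n−1} ∈ F, char F = 0, with β_n ∈ F* also fixed, such that β_n/β₀ ∉ ℚ_{<0}. Then the linear operator R₁ on F₀[x,y] defined on monomials by R₁(x^{sn+k} y^m) = ((k−a_k)β_k β_n / (sβ₀ + (m+k−a_k)β_n)) x^{sn} y^{m+k−a_k} for 0 < k < n, and R₁(x^{sn} y^m) = (β₀β_n/(sβ₀ + mβ_n)) x^{sn} y^m for s + m > 0, is a Rota–Baxter operator of weight zero on F₀[x,y]. -/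
/-!
Every monomial `x^{sn+k} y^m` is sent to a multiple `c_k / w(s, μ) · x^{sn} y^μ`, with
`μ = m + e_k`, of a monomial whose `x`-degree is a multiple of `n`, where `w(s, μ) = sβ₀ + μβₙ`
is additive in `(s, μ)`. Both sides of the Rota–Baxter identity on two monomials are then
multiples of the same monomial `x^{(s+s')n} y^{μ+μ'}`, and comparing the scalars reduces to
`1/(AA') = 1/(A(A+A')) + 1/(A'(A+A'))` for the weights `A, A'`. The condition
`βₙ/β₀ ∉ ℚ_{<0}` is exactly what keeps every weight `w(s, μ)` with `s + μ > 0` nonzero.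
-/

open MvPolynomial

theorem MvPolynomial.rotaBaxter_of_monomial {σ R : Type*} [CommSemiring R]
    (P : MvPolynomial σ R →ₗ[R] MvPolynomial σ R)
    (h : ∀ d d' : σ →₀ ℕ, d ≠ 0 → d' ≠ 0 →
      P (monomial d 1) * P (monomial d' 1) =
        P (P (monomial d 1) * monomial d' 1 + monomial d 1 * P (monomial d' 1)))
    {f g : MvPolynomial σ R} (hf : coeff 0 f = 0) (hg : coeff 0 g = 0) :
    P f * P g = P (P f * g + f * P g) := by
  have hmon : ∀ d d' (c c' : R), d ≠ 0 → d' ≠ 0 →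
      P (monomial d c) * P (monomial d' c') =
        P (P (monomial d c) * monomial d' c' + monomial d c * P (monomial d' c')) := by
    intro d d' c c' hd hd'
    have hc : ∀ (d : σ →₀ ℕ) (c : R), monomial d c = c • monomial d 1 := by
      simp [smul_monomial]
    rw [hc d c, hc d' c']
    simp only [map_smul, mul_smul_comm, smul_mul_assoc, ← smul_add, h d d' hd hd']
  have hsupp : ∀ {p : MvPolynomial σ R}, coeff 0 p = 0 → ∀ d ∈ p.support, d ≠ 0 :=
    fun hp d hd h0 => mem_support_iff.mp hd (h0 ▸ hp)
  rw [f.as_sum, g.as_sum]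
  simp only [map_sum, Finset.sum_mul_sum, ← Finset.sum_add_distrib]
  exact Finset.sum_congr rfl fun d hd => Finset.sum_congr rfl fun d' hd' =>
    hmon d d' _ _ (hsupp hf d hd) (hsupp hg d' hd')

theorem div_mul_div_eq_add_of_add_ne_zero {K : Type*} [Field K] {A A' : K} (hA : A ≠ 0)
    (hA' : A' ≠ 0) (hAA' : A + A' ≠ 0) (x y : K) :
    y / A' * (x / A) = x / A * (y / (A + A')) + y / A' * (x / (A + A')) := by
  field_simp
  ring

section ShiftOperator

variable {F : Type*} [Field F] {n : ℕ} {e : ℕ → ℕ} {c : ℕ → F} {β₀ βₙ : F}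
  {R : MvPolynomial (Fin 2) F →ₗ[F] MvPolynomial (Fin 2) F}

theorem rotaBaxter_shiftOperator_X_pow_mul_X_pow
    (hw : ∀ s μ : ℕ, 0 < s + μ → (s : F) * β₀ + (μ : F) * βₙ ≠ 0)
    (hR : ∀ s k m : ℕ, k < n → 0 < s + (m + e k) →
      R (X 0 ^ (s * n + k) * X 1 ^ m) =
        (c k / ((s : F) * β₀ + ((m + e k : ℕ) : F) * βₙ)) • (X 0 ^ (s * n) * X 1 ^ (m + e k)))
    {s k m s' k' m' : ℕ} (hk : k < n) (hk' : k' < n)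
    (h : 0 < s + (m + e k)) (h' : 0 < s' + (m' + e k')) :
    R (X 0 ^ (s * n + k) * X 1 ^ m) * R (X 0 ^ (s' * n + k') * X 1 ^ m') =
      R (R (X 0 ^ (s * n + k) * X 1 ^ m) * (X 0 ^ (s' * n + k') * X 1 ^ m') +
         X 0 ^ (s * n + k) * X 1 ^ m * R (X 0 ^ (s' * n + k') * X 1 ^ m')) := by
  rw [hR s k m hk h, hR s' k' m' hk' h']
  set μ := m + e k
  set μ' := m' + e k'
  have hleft : R (X 0 ^ (s * n) * X 1 ^ μ * (X 0 ^ (s' * n + k') * X 1 ^ m')) =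
      (c k' / (((s + s' : ℕ) : F) * β₀ + ((μ + μ' : ℕ) : F) * βₙ)) •
        (X 0 ^ ((s + s') * n) * X 1 ^ (μ + μ')) := by
    rw [show X 0 ^ (s * n) * X 1 ^ μ * (X 0 ^ (s' * n + k') * X 1 ^ m') =
        (X 0 ^ ((s + s') * n + k') * X 1 ^ (μ + m') : MvPolynomial (Fin 2) F) by ring,
      hR (s + s') k' (μ + m') hk' (by omega), add_assoc]
  have hright : R (X 0 ^ (s * n + k) * X 1 ^ m * (X 0 ^ (s' * n) * X 1 ^ μ')) =
      (c k / (((s + s' : ℕ) : F) * β₀ + ((μ + μ' : ℕ) : F) * βₙ)) •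
        (X 0 ^ ((s + s') * n) * X 1 ^ (μ + μ')) := by
    rw [show X 0 ^ (s * n + k) * X 1 ^ m * (X 0 ^ (s' * n) * X 1 ^ μ') =
        (X 0 ^ ((s + s') * n + k) * X 1 ^ (m + μ') : MvPolynomial (Fin 2) F) by ring,
      hR (s + s') k (m + μ') hk (by omega), show m + μ' + e k = μ + μ' by omega]
  have hA := hw s μ h
  have hA' := hw s' μ' h'
  have hAA' := hw (s + s') (μ + μ') (by omega)
  have hadd : ((s + s' : ℕ) : F) * β₀ + ((μ + μ' : ℕ) : F) * βₙ =
      ((s : F) * β₀ + (μ : F) * βₙ) + ((s' : F) * β₀ + (μ' : F) * βₙ) := by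
    push_cast; ring
  simp only [smul_mul_assoc, mul_smul_comm, map_add, map_smul, hleft, hright, smul_smul,
    ← add_smul]
  rw [show X 0 ^ (s * n) * X 1 ^ μ * (X 0 ^ (s' * n) * X 1 ^ μ') =
      (X 0 ^ ((s + s') * n) * X 1 ^ (μ + μ') : MvPolynomial (Fin 2) F) by ring]
  congr 1
  rw [hadd] at hAA' ⊢
  exact div_mul_div_eq_add_of_add_ne_zero hA hA' hAA' _ _

theorem exists_monomial_eq_X_pow_mul_X_pow (hn : 0 < n) (he : ∀ k, 0 < k → k < n → 0 < e k)
    {d : Fin 2 →₀ ℕ} (hd : d ≠ 0) :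
    ∃ s k m : ℕ, k < n ∧ 0 < s + (m + e k) ∧
      (monomial d 1 : MvPolynomial (Fin 2) F) = X 0 ^ (s * n + k) * X 1 ^ m := by
  refine ⟨d 0 / n, d 0 % n, d 1, Nat.mod_lt _ hn, ?_, ?_⟩
  · have hd01 : d 0 ≠ 0 ∨ d 1 ≠ 0 := by
      by_contra! h0
      exact hd (Finsupp.ext fun i => by fin_cases i <;> simp [h0.1, h0.2])
    have hdiv := Nat.div_add_mod' (d 0) n
    rcases Nat.eq_zero_or_pos (d 0 % n) with hk | hk
    · rcases Nat.eq_zero_or_pos (d 0 / n) with hs | hs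
      · rw [hs, hk] at hdiv
        omega
      · omega
    · have := he _ hk (Nat.mod_lt _ hn)
      positivity
  · rw [Nat.div_add_mod', monomial_eq, C_1, one_mul, Finsupp.prod_pow, Fin.prod_univ_two]

theorem rotaBaxter_shiftOperator (hn : 0 < n) (he : ∀ k, 0 < k → k < n → 0 < e k)
    (hw : ∀ s μ : ℕ, 0 < s + μ → (s : F) * β₀ + (μ : F) * βₙ ≠ 0)
    (hR : ∀ s k m : ℕ, k < n → 0 < s + (m + e k) →
      R (X 0 ^ (s * n + k) * X 1 ^ m) =
        (c k / ((s : F) * β₀ + ((m + e k : ℕ) : F) * βₙ)) • (X 0 ^ (s * n) * X 1 ^ (m + e k)))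
    {f g : MvPolynomial (Fin 2) F} (hf : coeff 0 f = 0) (hg : coeff 0 g = 0) :
    R f * R g = R (R f * g + f * R g) := by
  refine rotaBaxter_of_monomial R (fun d d' hd hd' => ?_) hf hg
  obtain ⟨s, k, m, hk, h, hd_eq⟩ := exists_monomial_eq_X_pow_mul_X_pow (F := F) hn he hd
  obtain ⟨s', k', m', hk', h', hd'_eq⟩ := exists_monomial_eq_X_pow_mul_X_pow (F := F) hn he hd'
  rw [hd_eq, hd'_eq]
  exact rotaBaxter_shiftOperator_X_pow_mul_X_pow hw hR hk hk' h h'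

end ShiftOperator

theorem natCast_mul_add_natCast_mul_ne_zero {F : Type*} [Field F] [CharZero F] {β₀ βₙ : F}
    (hβ₀ : β₀ ≠ 0) (hβₙ : βₙ ≠ 0) (hQ : ∀ q : ℚ, q < 0 → βₙ ≠ (q : F) * β₀)
    {s μ : ℕ} (h : 0 < s + μ) : (s : F) * β₀ + (μ : F) * βₙ ≠ 0 := by
  intro h0
  rcases Nat.eq_zero_or_pos μ with rfl | hμ
  · simp only [Nat.cast_zero, zero_mul, add_zero, mul_eq_zero, Nat.cast_eq_zero] at h0
    exact h0.elim (by omega) hβ₀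
  · have hβₙ_eq : βₙ = ((-(s / μ) : ℚ) : F) * β₀ := by
      have : (μ : F) ≠ 0 := Nat.cast_ne_zero.mpr hμ.ne'
      push_cast
      field_simp
      linear_combination h0
    rcases Nat.eq_zero_or_pos s with rfl | hs
    · simp [hβₙ] at hβₙ_eq
    · exact hQ _ (neg_neg_of_pos (by positivity)) hβₙ_eq

/-- The operator `R₁` on `F₀[x,y]` given by
`R₁(x^{sn+k} y^m) = ((k−a_k)β_k β_n / (sβ₀ + (m+k−a_k)β_n)) x^{sn} y^{m+k−a_k}`
for `0 < k < n` and
`R₁(x^{sn} y^m) = (β₀β_n/(sβ₀ + mβ_n)) x^{sn} y^m` for `s + m > 0`,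
with `β₀,…,β_{n−1}, β_n` nonzero and `β_n/β₀ ∉ ℚ_{<0}`, is a
Rota–Baxter operator of weight zero. -/
theorem stmt15 {F : Type*} [Field F] [CharZero F]
    (n : ℕ) (hn : 0 < n)
    (a : ℕ → ℕ) (ha : ∀ k : ℕ, 0 < k → k < n → a k < k)
    (β : ℕ → F) (hβ : ∀ k : ℕ, k < n → β k ≠ 0)
    (βn : F) (hβn : βn ≠ 0)
    (hQ : ∀ q : ℚ, q < 0 → βn ≠ (q : F) * β 0)
    (R : MvPolynomial (Fin 2) F →ₗ[F] MvPolynomial (Fin 2) F)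
    (hR1 : ∀ s k m : ℕ, 0 < k → k < n →
      R (X 0 ^ (s * n + k) * X 1 ^ m) =
        (((k - a k : ℕ) : F) * β k * βn /
          ((s : F) * β 0 + ((m + k - a k : ℕ) : F) * βn)) •
        (X 0 ^ (s * n) * X 1 ^ (m + k - a k)))
    (hR2 : ∀ s m : ℕ, 0 < s + m →
      R (X 0 ^ (s * n) * X 1 ^ m) =
        (β 0 * βn / ((s : F) * β 0 + (m : F) * βn)) •
        (X 0 ^ (s * n) * X 1 ^ m)) :
    ∀ f g : MvPolynomial (Fin 2) F, coeff 0 f = 0 → coeff 0 g = 0 →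
      R f * R g = R (R f * g + f * R g) := by
  intro f g hf hg
  refine rotaBaxter_shiftOperator (e := fun k => if k = 0 then 0 else k - a k)
    (c := fun k => if k = 0 then β 0 * βn else ((k - a k : ℕ) : F) * β k * βn) hn
    (fun k hk hkn => ?_) (fun s μ h => natCast_mul_add_natCast_mul_ne_zero (hβ 0 hn) hβn hQ h)
    (fun s k m hkn h => ?_) hf hg
  · simp only [hk.ne', if_false]
    exact Nat.sub_pos_of_lt (ha k hk hkn)
  · rcases Nat.eq_zero_or_pos k with rfl | hk
    · simpa using hR2 s m (by simpa using h)
    · simp only [hk.ne', if_false]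
      rw [hR1 s k m hk hkn, Nat.add_sub_assoc (ha k hk hkn).le]
end

section
/- Fix scalars β_k ∈ F* for k ≥ 0 and integers a_k with a_0 = 0, 0 ≤ a_k < k for k > 0, over a field F of characteristic zero. Then the linear operator R₂ on F₀[x,y] defined by R₂(x^k y^m) = ((k−a_k)β_k/(m+k−a_k)) y^{m+k−a_k} for k > 0, m ≥ 0, and R₂(y^m) = (β₀/m) y^m for m > 0, is a Rota–Baxter operator of weight zero on F₀[x,y]. -/
/-!
Write `y = X 1` and `d k = k - a k`, so that `R (x^k y^m) = c k • y^(m + d k) / (m + d k)` with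
`c 0 = β 0` and `c k = d k * β k` otherwise. Since `d k > 0` for `k > 0`, every nonconstant monomial
is sent to a positive power of `y`, and on two monomials whose images have degrees `p` and `q` the
Rota–Baxter identity reduces to `1/(p q) = (1/p + 1/q)/(p + q)`: integration by parts for
`∫ y^(p-1)` and `∫ y^(q-1)`. Both sides of the identity are bilinear, and the nonconstant monomials
span the polynomials without constant term.
-/

open MvPolynomial

theorem LinearMap.mul_eq_map_add_of_mem_span {K A : Type*} [CommSemiring K] [Semiring A]
    [Algebra K A] (R : A →ₗ[K] A) {S : Set A}
    (h : ∀ x ∈ S, ∀ y ∈ S, R x * R y = R (R x * y + x * R y))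
    {f g : A} (hf : f ∈ Submodule.span K S) (hg : g ∈ Submodule.span K S) :
    R f * R g = R (R f * g + f * R g) := by
  let lhs := (LinearMap.mul K A).compl₁₂ R R
  let rhs := ((LinearMap.mul K A).compl₁₂ R LinearMap.id +
    (LinearMap.mul K A).compl₁₂ LinearMap.id R).compr₂ R
  have hS : ∀ x ∈ S, lhs x g = rhs x g := fun x hx =>
    LinearMap.eqOn_span (f := lhs x) (g := rhs x) (h x hx) hg
  exact LinearMap.eqOn_span (f := lhs.flip g) (g := rhs.flip g) hS hf

namespace MvPolynomial

theorem mem_span_X_pow_mul_X_pow {F : Type*} [CommSemiring F] {f : MvPolynomial (Fin 2) F}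
    (hf : coeff 0 f = 0) :
    f ∈ Submodule.span F {p | ∃ k m : ℕ, 0 < k + m ∧ p = X 0 ^ k * X 1 ^ m} := by
  have hsupp : f ∈ restrictSupport F {0}ᶜ := (mem_restrictSupport_iff F).2 fun v hv hv0 =>
    mem_support_iff.1 hv (by rwa [Set.mem_singleton_iff.1 hv0])
  rw [restrictSupport_eq_span] at hsupp
  refine Submodule.span_mono ?_ hsupp
  rintro _ ⟨v, hv, rfl⟩
  refine ⟨v 0, v 1, ?_, ?_⟩
  · by_contra! h
    exact hv (Finsupp.ext fun i => by fin_cases i <;> simp <;> omega)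
  · dsimp only
    rw [monomial_eq, Finsupp.prod_fintype _ _ (by simp), Fin.prod_univ_two, C_1, one_mul]

end MvPolynomial

theorem rotaBaxter_X_pow_mul_X_pow {F : Type*} [Field F] [CharZero F]
    {R : MvPolynomial (Fin 2) F →ₗ[F] MvPolynomial (Fin 2) F} {c : ℕ → F} {d : ℕ → ℕ}
    (hd : ∀ k, 0 < k → 0 < d k)
    (hR : ∀ k m, 0 < k + m →
      R (X 0 ^ k * X 1 ^ m) = (c k / ((m + d k : ℕ) : F)) • X 1 ^ (m + d k))
    {k m j n : ℕ} (hkm : 0 < k + m) (hjn : 0 < j + n) :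
    R (X 0 ^ k * X 1 ^ m) * R (X 0 ^ j * X 1 ^ n) =
      R (R (X 0 ^ k * X 1 ^ m) * (X 0 ^ j * X 1 ^ n) +
        X 0 ^ k * X 1 ^ m * R (X 0 ^ j * X 1 ^ n)) := by
  have hpos : ∀ k m, 0 < k + m → 0 < m + d k := fun k m hkm => by
    rcases k.eq_zero_or_pos with rfl | hk
    · omega
    · have := hd k hk; omega
  rw [hR k m hkm, hR j n hjn]
  set p := m + d k
  set q := n + d j
  have hp0 : (p : F) ≠ 0 := Nat.cast_ne_zero.2 (hpos k m hkm).ne'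
  have hq0 : (q : F) ≠ 0 := Nat.cast_ne_zero.2 (hpos j n hjn).ne'
  have hpq0 : (p : F) + q ≠ 0 := by exact_mod_cast (Nat.add_pos_left (hpos k m hkm) q).ne'
  have hj : R (X 0 ^ j * X 1 ^ (n + p)) = (c j / ((p + q : ℕ) : F)) • X 1 ^ (p + q) := by
    rw [hR j (n + p) (by omega), show n + p + d j = p + q by omega]
  have hk : R (X 0 ^ k * X 1 ^ (m + q)) = (c k / ((p + q : ℕ) : F)) • X 1 ^ (p + q) := by
    rw [hR k (m + q) (by omega), show m + q + d k = p + q by omega]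
  have hsum : (c k / p) • X 1 ^ p * (X 0 ^ j * X 1 ^ n) + X 0 ^ k * X 1 ^ m * (c j / q) • X 1 ^ q =
      (c k / p) • (X 0 ^ j * X 1 ^ (n + p)) +
        (c j / q) • (X 0 ^ k * X 1 ^ (m + q) : MvPolynomial (Fin 2) F) := by
    rw [smul_mul_assoc, mul_smul_comm, pow_add, pow_add]
    congr 2 <;> ring
  rw [smul_mul_smul_comm, ← pow_add, hsum, map_add, map_smul, map_smul, hj, hk, smul_smul,
    smul_smul, ← add_smul]
  congr 1
  push_cast
  field_simp
  ring

theorem stmt16_general {F : Type*} [Field F] [CharZero F]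
    (a : ℕ → ℕ) (ha : ∀ k : ℕ, 0 < k → a k < k)
    (β : ℕ → F)
    (R : MvPolynomial (Fin 2) F →ₗ[F] MvPolynomial (Fin 2) F)
    (hR1 : ∀ k m : ℕ, 0 < k →
      R (X 0 ^ k * X 1 ^ m) =
        (((k - a k : ℕ) : F) * β k / (((m + k - a k : ℕ) : F))) •
        (X 1 ^ (m + k - a k)))
    (hR2 : ∀ m : ℕ, 0 < m →
      R (X 1 ^ m) = (β 0 / (m : F)) • (X 1 ^ m)) :
    ∀ f g : MvPolynomial (Fin 2) F, coeff 0 f = 0 → coeff 0 g = 0 →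
      R f * R g = R (R f * g + f * R g) := by
  have hR : ∀ k m, 0 < k + m → R (X 0 ^ k * X 1 ^ m) =
      ((if k = 0 then β 0 else ((k - a k : ℕ) : F) * β k) / ((m + (k - a k) : ℕ) : F)) •
        X 1 ^ (m + (k - a k)) := by
    intro k m hkm
    rcases k.eq_zero_or_pos with rfl | hk
    · simpa using hR2 m (by omega)
    · rw [if_neg hk.ne', ← Nat.add_sub_assoc (ha k hk).le, hR1 k m hk]
  intro f g hf hg
  refine R.mul_eq_map_add_of_mem_span ?_ (mem_span_X_pow_mul_X_pow hf)
    (mem_span_X_pow_mul_X_pow hg)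
  rintro _ ⟨k, m, hkm, rfl⟩ _ ⟨j, n, hjn, rfl⟩
  exact rotaBaxter_X_pow_mul_X_pow (fun k hk => Nat.sub_pos_of_lt (ha k hk)) hR hkm hjn

/-- The operator `R₂` on `F₀[x,y]` given by
`R₂(x^k y^m) = ((k−a_k)β_k/(m+k−a_k)) y^{m+k−a_k}` for `k > 0`, and
`R₂(y^m) = (β₀/m) y^m` for `m > 0`, with all `β_k ≠ 0`, `a_0 = 0`, and
`0 ≤ a_k < k` for `k > 0`, is a Rota–Baxter operator of weight zero. -/
theorem stmt16 {F : Type*} [Field F] [CharZero F]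
    (a : ℕ → ℕ) (ha0 : a 0 = 0) (ha : ∀ k : ℕ, 0 < k → a k < k)
    (β : ℕ → F) (hβ : ∀ k : ℕ, β k ≠ 0)
    (R : MvPolynomial (Fin 2) F →ₗ[F] MvPolynomial (Fin 2) F)
    (hR1 : ∀ k m : ℕ, 0 < k →
      R (X 0 ^ k * X 1 ^ m) =
        (((k - a k : ℕ) : F) * β k / (((m + k - a k : ℕ) : F))) •
        (X 1 ^ (m + k - a k)))
    (hR2 : ∀ m : ℕ, 0 < m →
      R (X 1 ^ m) = (β 0 / (m : F)) • (X 1 ^ m)) :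
    ∀ f g : MvPolynomial (Fin 2) F, coeff 0 f = 0 → coeff 0 g = 0 →
      R f * R g = R (R f * g + f * R g) :=
  stmt16_general a ha β R hR1 hR2
end

section
/- Fix n > 0, scalars β_k ∈ F* for 0 ≤ k < n, and integers a_k with a_0 = 0 and 0 ≤ a_k < k for 0 < k < n. Then the linear operator T₁ on F₀[x,y] defined on monomials by T₁(x^{sn+k} y^m) = β_k x^{sn} y^{m+k−a_k} (for 0 ≤ k < n, s, m ≥ 0, sn+k+m > 0) is an averaging operator on F₀[x,y], that is, T₁(f)T₁(g) = T₁(T₁(f)g) = T₁(fT₁(g)) for all f, g ∈ F₀[x,y]. -/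
open MvPolynomial

private lemma d_decomp (d : Fin 2 →₀ ℕ) :
    d = Finsupp.single 0 (d 0) + Finsupp.single 1 (d 1) := by
  ext i
  fin_cases i <;> simp [Finsupp.single_apply]

private lemma mono_rep {F : Type*} [Field F] (d : Fin 2 →₀ ℕ) (c : F) :
    (monomial d c : MvPolynomial (Fin 2) F) = c • (X 0 ^ (d 0) * X 1 ^ (d 1)) := by
  rw [X_pow_eq_monomial, X_pow_eq_monomial, monomial_mul, one_mul, smul_monomial,
    smul_eq_mul, mul_one, ← d_decomp]

private lemma pow_mul_pow {F : Type*} [Field F] (A B C D : ℕ) :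
    (X 0 ^ A * X 1 ^ B) * (X 0 ^ C * X 1 ^ D) = (X (0 : Fin 2) ^ (A + C) * X 1 ^ (B + D) : MvPolynomial (Fin 2) F) := by
  rw [pow_add, pow_add]; ring

private lemma d_pos (d : Fin 2 →₀ ℕ) (hd : d ≠ 0) : 0 < d 0 + d 1 := by
  by_contra h
  apply hd
  rw [d_decomp d]
  have h0 : d 0 = 0 := by omega
  have h1 : d 1 = 0 := by omega
  simp [h0, h1]

/-- The operator `T₁` on `F₀[x,y]` given by
`T₁(x^{sn+k} y^m) = β_k x^{sn} y^{m+k−a_k}` (for `0 ≤ k < n`, `sn+k+m > 0`,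
with `a_0 = 0`, `0 ≤ a_k < k` for `0 < k < n`, and `β_k ≠ 0`) is an
averaging operator on `F₀[x,y]`. -/
theorem stmt17 {F : Type*} [Field F]
    (n : ℕ) (hn : 0 < n)
    (a : ℕ → ℕ) (ha0 : a 0 = 0) (ha : ∀ k : ℕ, 0 < k → k < n → a k < k)
    (β : ℕ → F) (hβ : ∀ k : ℕ, k < n → β k ≠ 0)
    (T : MvPolynomial (Fin 2) F →ₗ[F] MvPolynomial (Fin 2) F)
    (hT : ∀ s k m : ℕ, k < n → 0 < s * n + k + m →
      T (X 0 ^ (s * n + k) * X 1 ^ m) =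
        β k • (X 0 ^ (s * n) * X 1 ^ (m + k - a k))) :
    ∀ f g : MvPolynomial (Fin 2) F, coeff 0 f = 0 → coeff 0 g = 0 →
      T f * T g = T (T f * g) ∧ T f * T g = T (f * T g) := by
  have haK : ∀ k, k < n → a k ≤ k := by
    intro k hk
    rcases Nat.eq_zero_or_pos k with h | h
    · simp [h, ha0]
    · exact (ha k h hk).le
  have hT' : ∀ e m : ℕ, 0 < e + m →
      T (X 0 ^ e * X 1 ^ m) =
        β (e % n) • (X 0 ^ (n * (e / n)) * X 1 ^ (m + e % n - a (e % n))) := by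
    intro e m hem
    have h1 : e / n * n + e % n = e := by
      rw [mul_comm]; exact Nat.div_add_mod e n
    have h2 := hT (e / n) (e % n) m (Nat.mod_lt _ hn) (by omega)
    rw [h1] at h2
    rw [h2, mul_comm (e / n) n]

  have key1 : ∀ (d d' : Fin 2 →₀ ℕ) (c c' : F), d ≠ 0 → d' ≠ 0 →
      T (monomial d c) * T (monomial d' c') = T (T (monomial d c) * monomial d' c') := by
    intro d d' c c' hd hd'
    have hp := d_pos d hd
    have hp' := d_pos d' hd'
    have hak : a (d 0 % n) ≤ d 0 % n := haK _ (Nat.mod_lt _ hn)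
    have hak' : a (d' 0 % n) ≤ d' 0 % n := haK _ (Nat.mod_lt _ hn)
    rw [mono_rep, mono_rep]
    simp only [map_smul]
    rw [hT' (d 0) (d 1) hp, hT' (d' 0) (d' 1) hp']
    simp only [smul_mul_assoc, mul_smul_comm, map_smul]
    rw [pow_mul_pow, pow_mul_pow,
      hT' (n * (d 0 / n) + d' 0) (d 1 + d 0 % n - a (d 0 % n) + d' 1)
        (by have h := Nat.le_add_left (d' 0) (n * (d 0 / n)); omega)]
    rw [Nat.mul_add_mod, Nat.mul_add_div hn]
    rw [show d 1 + d 0 % n - a (d 0 % n) + d' 1 + d' 0 % n - a (d' 0 % n)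
          = d 1 + d 0 % n - a (d 0 % n) + (d' 1 + d' 0 % n - a (d' 0 % n)) by omega,
      show n * (d 0 / n + d' 0 / n) = n * (d 0 / n) + n * (d' 0 / n) by ring]
    simp only [smul_smul]
    congr 1
    ring
  have key2 : ∀ (d d' : Fin 2 →₀ ℕ) (c c' : F), d ≠ 0 → d' ≠ 0 →
      T (monomial d c) * T (monomial d' c') = T (monomial d c * T (monomial d' c')) := by
    intro d d' c c' hd hd'
    have hp := d_pos d hd
    have hp' := d_pos d' hd'
    have hak : a (d 0 % n) ≤ d 0 % n := haK _ (Nat.mod_lt _ hn)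
    have hak' : a (d' 0 % n) ≤ d' 0 % n := haK _ (Nat.mod_lt _ hn)
    rw [mono_rep, mono_rep]
    simp only [map_smul]
    rw [hT' (d 0) (d 1) hp, hT' (d' 0) (d' 1) hp']
    simp only [smul_mul_assoc, mul_smul_comm, map_smul]
    rw [pow_mul_pow, pow_mul_pow,
      hT' (d 0 + n * (d' 0 / n)) (d 1 + (d' 1 + d' 0 % n - a (d' 0 % n))) (by omega)]
    rw [show d 0 + n * (d' 0 / n) = d 0 + (d' 0 / n) * n by ring,
      Nat.add_mul_mod_self_right, Nat.add_mul_div_right _ _ hn]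
    rw [show d 1 + (d' 1 + d' 0 % n - a (d' 0 % n)) + d 0 % n - a (d 0 % n)
          = d 1 + d 0 % n - a (d 0 % n) + (d' 1 + d' 0 % n - a (d' 0 % n)) by omega,
      show n * (d 0 / n + d' 0 / n) = n * (d 0 / n) + n * (d' 0 / n) by ring]

  intro f g hf hg
  have hdf : ∀ d ∈ f.support, d ≠ (0 : Fin 2 →₀ ℕ) := by
    intro d hd h0
    exact (mem_support_iff.mp hd) (h0 ▸ hf)
  have hdg : ∀ d ∈ g.support, d ≠ (0 : Fin 2 →₀ ℕ) := by
    intro d hd h0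
    exact (mem_support_iff.mp hd) (h0 ▸ hg)
  constructor
  · conv_lhs => rw [← support_sum_monomial_coeff f, ← support_sum_monomial_coeff g]
    conv_rhs => rw [← support_sum_monomial_coeff f, ← support_sum_monomial_coeff g]
    rw [map_sum, Finset.sum_mul_sum, map_sum, Finset.sum_mul_sum, map_sum]
    refine Finset.sum_congr rfl fun d hd => ?_
    rw [map_sum]
    refine Finset.sum_congr rfl fun d' hd' => ?_
    exact key1 d d' _ _ (hdf d hd) (hdg d' hd')
  · conv_lhs => rw [← support_sum_monomial_coeff f, ← support_sum_monomial_coeff g]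
    conv_rhs => rw [← support_sum_monomial_coeff f, ← support_sum_monomial_coeff g]
    rw [map_sum, map_sum, Finset.sum_mul_sum, Finset.sum_mul_sum, map_sum]
    refine Finset.sum_congr rfl fun d hd => ?_
    rw [map_sum]
    refine Finset.sum_congr rfl fun d' hd' => ?_
    exact key2 d d' _ _ (hdf d hd) (hdg d' hd')
end

section
/- Let F have characteristic zero and let R be a linear operator on F[x,y] satisfying R(xⁿyᵐ) = α_{n,m} xⁿyᵐ for scalars α_{n,m} (n, m ≥ 0). If R is a Rota–Baxter operator of weight zero, then R = 0, i.e. α_{n,m} = 0 for all n, m. -/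
open MvPolynomial

/-!
If `R 1 = a • 1` and `R g = b • g`, the weight-zero Rota–Baxter identity for the pair `(1, g)` reads
`a b g = R((a + b) g) = (a + b) b g`, so `b² g = 0`. Every monomial is such a `g`, and `1` is a
monomial, so every `α n m` squares to zero.
-/

section RotaBaxter

variable {K A : Type*} [CommRing K] [Ring A] [Algebra K A] {R : Module.End K A}

theorem sq_smul_eq_zero_of_rotaBaxter_of_map_one
    (hRB : ∀ f g : A, R f * R g = R (R f * g + f * R g))
    {a b : K} (h1 : R 1 = a • 1) {g : A} (hg : R g = b • g) :
    (b * b) • g = 0 := by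
  have key : (a * b) • g = ((a + b) * b) • g :=
    calc (a * b) • g = R 1 * R g := by rw [h1, hg, smul_one_mul, smul_smul]
      _ = R (R 1 * g + 1 * R g) := hRB 1 g
      _ = ((a + b) * b) • g := by
        rw [h1, hg, smul_one_mul, one_mul, ← add_smul, map_smul, hg, smul_smul]
  rwa [add_mul, add_smul, left_eq_add] at key

theorem Module.End.HasEigenvector.eq_zero_of_rotaBaxter [IsDomain K] [Module.IsTorsionFree K A]
    (hRB : ∀ f g : A, R f * R g = R (R f * g + f * R g))
    {a b : K} (h1 : R 1 = a • 1) {g : A} (hg : R.HasEigenvector b g) :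
    b = 0 := by
  have hsq := sq_smul_eq_zero_of_rotaBaxter_of_map_one hRB h1 hg.apply_eq_smul
  exact mul_self_eq_zero.mp ((smul_eq_zero.mp hsq).resolve_right hg.2)

end RotaBaxter

theorem stmt18_general {F : Type*} [Field F]
    (R : MvPolynomial (Fin 2) F →ₗ[F] MvPolynomial (Fin 2) F)
    (α : ℕ → ℕ → F)
    (hdiag : ∀ n m : ℕ, R (X 0 ^ n * X 1 ^ m) = α n m • (X 0 ^ n * X 1 ^ m))
    (hRB : ∀ f g : MvPolynomial (Fin 2) F, R f * R g = R (R f * g + f * R g)) :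
    ∀ n m : ℕ, α n m = 0 := by
  intro n m
  have h1 : R 1 = α 0 0 • 1 := by simpa using hdiag 0 0
  have hmono : Module.End.HasEigenvector R (α n m) (X 0 ^ n * X 1 ^ m) :=
    ⟨Module.End.mem_eigenspace_iff.mpr (hdiag n m),
      mul_ne_zero (pow_ne_zero _ (X_ne_zero _)) (pow_ne_zero _ (X_ne_zero _))⟩
  exact hmono.eq_zero_of_rotaBaxter hRB h1

/-- A Rota–Baxter operator of weight zero on `F[x,y]`
(char F = 0) that is diagonal on the monomial basis is zero. -/
theorem stmt18 {F : Type*} [Field F] [CharZero F]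
    (R : MvPolynomial (Fin 2) F →ₗ[F] MvPolynomial (Fin 2) F)
    (α : ℕ → ℕ → F)
    (hdiag : ∀ n m : ℕ, R (X 0 ^ n * X 1 ^ m) = α n m • (X 0 ^ n * X 1 ^ m))
    (hRB : ∀ f g : MvPolynomial (Fin 2) F, R f * R g = R (R f * g + f * R g)) :
    ∀ n m : ℕ, α n m = 0 :=
  stmt18_general R α hdiag hRB
end

section
/- Let T be a linear operator on F₀[x,y] (or F[x,y]) with T(xⁿyᵐ) = α_{n,m} xⁿyᵐ for scalars α_{n,m}. If T is an averaging operator, then any two nonzero coefficients are equal: α_{n,m} ≠ 0 and α_{s,t} ≠ 0 imply α_{n,m} = α_{s,t}. Moreover the averaging identities are equivalent to the relations α_{n,m}α_{s,t} = α_{n,m}α_{n+s,m+t} = α_{s,t}α_{n+s,m+t} for all admissible indices. -/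
/-!
For a diagonal operator `T (xᵘ) = a u • xᵘ`, the products `T xᵘ * T xᵛ` and `T (T xᵘ * xᵛ)`
are the multiples `a u * a v` and `a u * a (u + v)` of `xᵘ⁺ᵛ`. Both sides of
`T f * T g = T (T f * g)` are bilinear in `f, g`, so this identity holds iff
`a u * a v = a u * a (u + v)` for all `u, v`; in a commutative algebra the other averaging
identity is the same one with `f` and `g` swapped.
Cancelling, `a u ≠ 0` gives `a v = a (u + v)` and `a v ≠ 0` gives `a u = a (u + v)`.
-/

open MvPolynomial

def LinearMap.IsAveraging {R A : Type*} [CommSemiring R] [Semiring A] [Algebra R A]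
    (T : A →ₗ[R] A) : Prop :=
  ∀ f g, T f * T g = T (T f * g) ∧ T f * T g = T (f * T g)

namespace LinearMap

variable {R A : Type*} [CommSemiring R] [CommSemiring A] [Algebra R A]

theorem isAveraging_iff_map_mul_map_eq_map_map_mul (T : A →ₗ[R] A) :
    T.IsAveraging ↔ ∀ f g, T f * T g = T (T f * g) :=
  ⟨fun h f g => (h f g).1, fun h f g => ⟨h f g, by rw [mul_comm, h g f, mul_comm]⟩⟩

end LinearMap

namespace MvPolynomial

variable {σ R : Type*} [CommSemiring R]

theorem smul_monomial_one (c : R) (u : σ →₀ ℕ) : c • monomial u (1 : R) = monomial u c := by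
  rw [smul_monomial, smul_eq_mul, mul_one]

variable (T : MvPolynomial σ R →ₗ[R] MvPolynomial σ R) {a : (σ →₀ ℕ) → R}

theorem map_monomial_mul_map_monomial (hT : ∀ u, T (monomial u 1) = a u • monomial u 1)
    (u v : σ →₀ ℕ) :
    T (monomial u 1) * T (monomial v 1) = monomial (u + v) (a u * a v) := by
  rw [hT, hT, smul_monomial_one, smul_monomial_one, monomial_mul]

theorem map_map_monomial_mul_monomial (hT : ∀ u, T (monomial u 1) = a u • monomial u 1)
    (u v : σ →₀ ℕ) :
    T (T (monomial u 1) * monomial v 1) = monomial (u + v) (a u * a (u + v)) := by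
  rw [hT, smul_mul_assoc, monomial_mul, one_mul, map_smul, hT, smul_smul, smul_monomial_one]

theorem map_mul_map_eq_map_map_mul_iff (hT : ∀ u, T (monomial u 1) = a u • monomial u 1) :
    (∀ f g, T f * T g = T (T f * g)) ↔ ∀ u v, a u * a v = a u * a (u + v) := by
  constructor
  · intro h u v
    have := h (monomial u 1) (monomial v 1)
    rw [map_monomial_mul_map_monomial T hT, map_map_monomial_mul_monomial T hT] at this
    classical
    simpa [coeff_monomial] using congrArg (coeff (u + v)) this
  · intro h
    have key : (LinearMap.mul R _).compl₁₂ T T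
        = ((LinearMap.mul R _).compl₁₂ T LinearMap.id).compr₂ T := by
      ext u v : 4
      change T (monomial u 1) * T (monomial v 1) = T (T (monomial u 1) * monomial v 1)
      rw [map_monomial_mul_map_monomial T hT, map_map_monomial_mul_monomial T hT, h]
    exact fun f g => LinearMap.congr_fun₂ key f g

theorem monomial_one_fin_two (u : Fin 2 →₀ ℕ) :
    monomial u (1 : R) = X 0 ^ u 0 * X 1 ^ u 1 := by
  rw [monomial_eq, C_1, one_mul, Finsupp.prod_fintype _ _ (fun _ => pow_zero _), Fin.prod_univ_two]

end MvPolynomial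

theorem eq_of_forall_mul_eq_mul_add {M R : Type*} [AddCommMagma M] [CommMonoidWithZero R]
    [IsLeftCancelMulZero R] {a : M → R} (h : ∀ u v, a u * a v = a u * a (u + v)) {u v : M}
    (hu : a u ≠ 0) (hv : a v ≠ 0) : a u = a v :=
  calc a u = a (v + u) := mul_left_cancel₀ hv (h v u)
    _ = a v := by rw [add_comm]; exact (mul_left_cancel₀ hu (h u v)).symm

/-- For a diagonal operator `T(xⁿyᵐ) = α_{n,m} xⁿyᵐ` on `F[x,y]`:
if `T` is averaging then all nonzero coefficients are equal; moreover the
averaging identities are equivalent to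
`α_{n,m}α_{s,t} = α_{n,m}α_{n+s,m+t} = α_{s,t}α_{n+s,m+t}`. -/
theorem stmt19 {F : Type*} [Field F]
    (T : MvPolynomial (Fin 2) F →ₗ[F] MvPolynomial (Fin 2) F)
    (α : ℕ → ℕ → F)
    (hdiag : ∀ n m : ℕ, T (X 0 ^ n * X 1 ^ m) = α n m • (X 0 ^ n * X 1 ^ m)) :
    ((∀ f g : MvPolynomial (Fin 2) F,
        T f * T g = T (T f * g) ∧ T f * T g = T (f * T g)) →
      ∀ n m s t : ℕ, α n m ≠ 0 → α s t ≠ 0 → α n m = α s t) ∧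
    ((∀ f g : MvPolynomial (Fin 2) F,
        T f * T g = T (T f * g) ∧ T f * T g = T (f * T g)) ↔
      (∀ n m s t : ℕ,
        α n m * α s t = α n m * α (n + s) (m + t) ∧
        α n m * α s t = α s t * α (n + s) (m + t))) := by
  have hT : ∀ u, T (monomial u 1) = α (u 0) (u 1) • monomial u 1 := fun u => by
    simpa only [monomial_one_fin_two] using hdiag (u 0) (u 1)
  have hiff : T.IsAveraging ↔ ∀ n m s t, α n m * α s t = α n m * α (n + s) (m + t) := by
    rw [T.isAveraging_iff_map_mul_map_eq_map_map_mul, map_mul_map_eq_map_map_mul_iff T hT]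
    refine ⟨fun h n m s t => ?_, fun h u v => h _ _ _ _⟩
    simpa using h (Finsupp.equivFunOnFinite.symm ![n, m]) (Finsupp.equivFunOnFinite.symm ![s, t])
  have hsymm : (∀ n m s t, α n m * α s t = α n m * α (n + s) (m + t)) ↔
      ∀ n m s t, α n m * α s t = α n m * α (n + s) (m + t) ∧
        α n m * α s t = α s t * α (n + s) (m + t) :=
    ⟨fun h n m s t => ⟨h n m s t, by rw [mul_comm, h s t n m, add_comm s, add_comm t]⟩,
      fun h n m s t => (h n m s t).1⟩
  refine ⟨fun h n m s t => ?_, hiff.trans hsymm⟩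
  exact eq_of_forall_mul_eq_mul_add (a := fun p : ℕ × ℕ => α p.1 p.2)
    (fun p q => hiff.1 h p.1 p.2 q.1 q.2) (u := (n, m)) (v := (s, t))
end
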